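/- arXiv:1912.04429 — 2 statements merged into one kernel-verified Lean document; each statement's English description precedes it below -/
import Mathlib

section
/- Taylor data and genericity of the profile W̄ at the origin: Let W̄ : ℝ³ → ℝ be defined by W̄(y) = B(y̌)^{−1/2} W₁d( B(y̌)^{3/2} y₁ ), where y̌ = (y₂,y₃) and B(y̌) = 1/(1 + y₂² + y₃²). Then W̄(0) = 0; ∂₁W̄(0) = −1 and ∂₂W̄(0) = ∂₃W̄(0) = 0; every second-order partial derivative of W̄ vanishes at 0; among the third-order partial derivatives at 0, ∂₁³W̄(0) = 6, ∂₁∂₂²W̄(0) = 2, ∂₁∂₃²W̄(0) = 2, and all other third-order partial derivatives of W̄ vanish at 0. In particular the Hessian matrix of ∂₁W̄ at the origin equals diag(6,2,2) and is positive definite (the genericity condition). -/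
/-!
`W̄` solves the implicit profile equation `W³ + (1 + y₂² + y₃²) W + y₁ = 0`: `W₁d` is Cardano's
root of `u³ + u + t = 0`, and the factors `B^{-1/2}`, `B^{3/2}` rescale this cubic into the
profile equation. Since `W̄` is smooth, the identity can be differentiated up to three times at
the origin, where `W̄ = 0` and the coefficient `1 + y₂² + y₃²` equals `1` with vanishing gradient;
each differentiation then determines the next order of derivatives of `W̄` from the lower ones.
-/

noncomputable section

abbrev V3 : Type := Fin 3 → ℝ

def pdS (j : Fin 3) (g : V3 → ℝ) (x : V3) : ℝ :=
  fderiv ℝ g x (Pi.single j 1 : V3)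

def W1d (y : ℝ) : ℝ :=
  (-y / 2 + Real.sqrt (1 / 27 + y ^ 2 / 4)) ^ ((1 : ℝ) / 3)
    - (y / 2 + Real.sqrt (1 / 27 + y ^ 2 / 4)) ^ ((1 : ℝ) / 3)

def Bf (y : V3) : ℝ := 1 / (1 + y 1 ^ 2 + y 2 ^ 2)

def Wbar (y : V3) : ℝ :=
  Bf y ^ (-(1 : ℝ) / 2) * W1d (Bf y ^ ((3 : ℝ) / 2) * y 0)

end

open scoped ContDiff

section Calculus

variable {f g : V3 → ℝ}

@[fun_prop]
theorem contDiff_pdS (j : Fin 3) (hf : ContDiff ℝ ∞ f) : ContDiff ℝ ∞ (fun x => pdS j f x) :=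
  (hf.fderiv_right le_rfl).clm_apply contDiff_const

theorem pdS_add (j : Fin 3) (hf : ContDiff ℝ ∞ f) (hg : ContDiff ℝ ∞ g) :
    pdS j (fun x => f x + g x) = fun x => pdS j f x + pdS j g x := by
  ext x
  simp only [pdS, fderiv_fun_add (hf.differentiable (by simp) x) (hg.differentiable (by simp) x),
    add_apply]

theorem pdS_mul (j : Fin 3) (hf : ContDiff ℝ ∞ f) (hg : ContDiff ℝ ∞ g) :
    pdS j (fun x => f x * g x) = fun x => pdS j f x * g x + f x * pdS j g x := by
  ext x
  simp only [pdS, fderiv_fun_mul (hf.differentiable (by simp) x) (hg.differentiable (by simp) x),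
    add_apply, smul_apply, smul_eq_mul]
  ring

theorem pdS_const (j : Fin 3) (c : ℝ) : pdS j (fun _ => c) = fun _ => 0 := by
  ext x
  simp [pdS]

theorem pdS_coord (j i : Fin 3) : pdS j (fun x => x i) = fun _ => (Pi.single j 1 : V3) i := by
  ext x
  simp [pdS, fderiv_apply]

end Calculus

def SolvesProfileCubic (w : V3 → ℝ) : Prop :=
  ∀ y, w y ^ 3 + (1 + y 1 ^ 2 + y 2 ^ 2) * w y + y 0 = 0

/-- Half the Hessian of `y₂² + y₃²`. -/
def yzHess (j k : Fin 3) : ℝ :=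
  (Pi.single j 1 : V3) 1 * (Pi.single k 1 : V3) 1 + (Pi.single j 1 : V3) 2 * (Pi.single k 1 : V3) 2

section ImplicitCubic

variable {w : V3 → ℝ}

-- Products instead of powers, so that `pdS_mul` alone expands the derivatives.
theorem SolvesProfileCubic.fun_eq_zero (hcubic : SolvesProfileCubic w) :
    (fun y => w y * w y * w y + (1 + y 1 * y 1 + y 2 * y 2) * w y + y 0) = fun _ => 0 := by
  ext y
  linear_combination hcubic y

theorem SolvesProfileCubic.apply_zero (hcubic : SolvesProfileCubic w) : w 0 = 0 := by
  have h := hcubic 0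
  simp only [Pi.zero_apply] at h
  nlinarith [sq_nonneg (w 0)]

theorem SolvesProfileCubic.pdS_zero (hw : ContDiff ℝ ∞ w) (hcubic : SolvesProfileCubic w)
    (k : Fin 3) : pdS k w 0 = -(Pi.single k 1 : V3) 0 := by
  have h := congrArg (fun F => pdS k F 0) hcubic.fun_eq_zero
  simp (disch := fun_prop) only [pdS_add, pdS_mul, pdS_const, pdS_coord] at h
  simp only [hcubic.apply_zero, Pi.zero_apply] at h
  linear_combination h

theorem SolvesProfileCubic.pdS_pdS_zero (hw : ContDiff ℝ ∞ w) (hcubic : SolvesProfileCubic w)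
    (j k : Fin 3) : pdS j (pdS k w) 0 = 0 := by
  have h := congrArg (fun F => pdS j (pdS k F) 0) hcubic.fun_eq_zero
  simp (disch := fun_prop) only [pdS_add, pdS_mul, pdS_const, pdS_coord] at h
  simp only [hcubic.apply_zero, Pi.zero_apply] at h
  linear_combination h

theorem SolvesProfileCubic.pdS_pdS_pdS_zero (hw : ContDiff ℝ ∞ w)
    (hcubic : SolvesProfileCubic w) (i j k : Fin 3) :
    pdS i (pdS j (pdS k w)) 0 =
      6 * (Pi.single i 1 : V3) 0 * (Pi.single j 1 : V3) 0 * (Pi.single k 1 : V3) 0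
        + 2 * ((Pi.single i 1 : V3) 0 * yzHess j k + (Pi.single j 1 : V3) 0 * yzHess i k
          + (Pi.single k 1 : V3) 0 * yzHess i j) := by
  have h := congrArg (fun F => pdS i (pdS j (pdS k F)) 0) hcubic.fun_eq_zero
  simp (disch := fun_prop) only [pdS_add, pdS_mul, pdS_const, pdS_coord] at h
  simp only [hcubic.apply_zero, Pi.zero_apply, hcubic.pdS_zero hw, hcubic.pdS_pdS_zero hw] at h
  unfold yzHess
  linear_combination h

end ImplicitCubic

theorem cardano_radicand_pos (t : ℝ) : 0 < t / 2 + √(1 / 27 + t ^ 2 / 4) := by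
  have := Real.lt_sqrt_of_sq_lt (show (-t / 2) ^ 2 < 1 / 27 + t ^ 2 / 4 by nlinarith)
  linarith

theorem cardano_radicand_pos' (t : ℝ) : 0 < -t / 2 + √(1 / 27 + t ^ 2 / 4) := by
  simpa [neg_div, neg_sq] using cardano_radicand_pos (-t)

theorem rpow_one_third_pow_three {x : ℝ} (hx : 0 ≤ x) : (x ^ ((1 : ℝ) / 3)) ^ 3 = x := by
  simpa using Real.rpow_inv_natCast_pow hx (n := 3) (by norm_num)

theorem W1d_cubic (t : ℝ) : W1d t ^ 3 + W1d t + t = 0 := by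
  set s := √(1 / 27 + t ^ 2 / 4)
  have ha := cardano_radicand_pos' t
  have hb := cardano_radicand_pos t
  have hab : (-t / 2 + s) * (t / 2 + s) = (1 / 3) ^ 3 := by
    nlinarith [Real.sq_sqrt (show (0 : ℝ) ≤ 1 / 27 + t ^ 2 / 4 by positivity)]
  have hprod : (-t / 2 + s) ^ ((1 : ℝ) / 3) * (t / 2 + s) ^ ((1 : ℝ) / 3) = 1 / 3 := by
    rw [← Real.mul_rpow ha.le hb.le, hab, ← Real.rpow_natCast, ← Real.rpow_mul (by norm_num)]
    norm_num
  -- `(A - B)³ = A³ - B³ - 3AB(A - B)` with `A³ - B³ = -t` and `AB = 1/3`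
  unfold W1d
  linear_combination rpow_one_third_pow_three ha.le - rpow_one_third_pow_three hb.le
    - 3 * ((-t / 2 + s) ^ ((1 : ℝ) / 3) - (t / 2 + s) ^ ((1 : ℝ) / 3)) * hprod

theorem contDiff_W1d : ContDiff ℝ ∞ W1d := by
  have hs : ContDiff ℝ ∞ fun t : ℝ => √(1 / 27 + t ^ 2 / 4) :=
    (by fun_prop : ContDiff ℝ ∞ fun t : ℝ => 1 / 27 + t ^ 2 / 4).sqrt fun t => by positivity
  exact ((contDiff_id.neg.div_const 2).add hs |>.rpow_const_of_ne
    fun t => (cardano_radicand_pos' t).ne').sub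
    ((contDiff_id.div_const 2).add hs |>.rpow_const_of_ne fun t => (cardano_radicand_pos t).ne')

theorem Bf_pos (y : V3) : 0 < Bf y := by
  unfold Bf
  positivity

theorem contDiff_Wbar : ContDiff ℝ ∞ Wbar := by
  have hB : ContDiff ℝ ∞ Bf := contDiff_const.div (by fun_prop) fun y => by positivity
  have hB' (p : ℝ) : ContDiff ℝ ∞ fun y => Bf y ^ p :=
    hB.rpow_const_of_ne fun y => (Bf_pos y).ne'
  exact (hB' _).mul <| contDiff_W1d.comp <| (hB' _).mul (contDiff_apply ℝ ℝ 0)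

theorem Wbar_solvesProfileCubic : SolvesProfileCubic Wbar := by
  intro y
  have hB := Bf_pos y
  have hsq : (Bf y ^ (-(1 : ℝ) / 2)) ^ 2 = 1 + y 1 ^ 2 + y 2 ^ 2 := by
    rw [← Real.rpow_natCast, ← Real.rpow_mul hB.le, Bf]
    norm_num [Real.rpow_neg_one]
  have hcube : (Bf y ^ (-(1 : ℝ) / 2)) ^ 3 * Bf y ^ ((3 : ℝ) / 2) = 1 := by
    rw [← Real.rpow_natCast, ← Real.rpow_mul hB.le, ← Real.rpow_add hB]
    norm_num
  unfold Wbar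
  linear_combination (Bf y ^ (-(1 : ℝ) / 2)) ^ 3 * W1d_cubic (Bf y ^ ((3 : ℝ) / 2) * y 0)
    - W1d (Bf y ^ ((3 : ℝ) / 2) * y 0) * Bf y ^ (-(1 : ℝ) / 2) * hsq - y 0 * hcube

/-- Taylor data and genericity of the profile `W̄` at the origin: `W̄(0) = 0`,
`∇W̄(0) = (−1,0,0)`, all second-order partials vanish at `0`, the third-order partials at
`0` are `∂₁³W̄(0) = 6`, `∂₁∂₂²W̄(0) = ∂₁∂₃²W̄(0) = 2` (in any order of differentiation)
with all others vanishing; in particular the Hessian of `∂₁W̄` at `0` is `diag(6,2,2)`,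
which is positive definite (genericity). -/
theorem Wbar_taylor_data_and_genericity :
    Wbar 0 = 0 ∧
    pdS 0 Wbar 0 = -1 ∧ pdS 1 Wbar 0 = 0 ∧ pdS 2 Wbar 0 = 0 ∧
    (∀ j k : Fin 3, pdS j (pdS k Wbar) 0 = 0) ∧
    (∀ i j k : Fin 3,
      pdS i (pdS j (pdS k Wbar)) 0 =
        if ({i, j, k} : Multiset (Fin 3)) = ({0, 0, 0} : Multiset (Fin 3)) then 6
        else if ({i, j, k} : Multiset (Fin 3)) = ({0, 1, 1} : Multiset (Fin 3)) then 2
        else if ({i, j, k} : Multiset (Fin 3)) = ({0, 2, 2} : Multiset (Fin 3)) then 2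
        else 0) ∧
    Matrix.of (fun j k : Fin 3 => pdS j (pdS k (pdS 0 Wbar)) 0) =
      Matrix.diagonal ![6, 2, 2] ∧
    (Matrix.of (fun j k : Fin 3 => pdS j (pdS k (pdS 0 Wbar)) 0)).PosDef := by
  have hcubic := Wbar_solvesProfileCubic
  have h1 := hcubic.pdS_zero contDiff_Wbar
  have h3 := hcubic.pdS_pdS_pdS_zero contDiff_Wbar
  have hess : Matrix.of (fun j k : Fin 3 => pdS j (pdS k (pdS 0 Wbar)) 0) =
      Matrix.diagonal ![6, 2, 2] := by
    ext j k
    fin_cases j <;> fin_cases k <;> simp [h3, yzHess]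
  refine ⟨hcubic.apply_zero, by simp [h1], by simp [h1], by simp [h1],
    hcubic.pdS_pdS_zero contDiff_Wbar, fun i j k => ?_, hess, ?_⟩
  · rw [h3]
    fin_cases i <;> fin_cases j <;> fin_cases k <;> simp +decide [yzHess]
  · rw [hess, Matrix.posDef_diagonal_iff]
    intro i
    fin_cases i <;> simp
end

section
/- Weighted zeroth- and first-order bounds for the profile W̄: Let W̄ : ℝ³ → ℝ be defined by W̄(y) = B(y̌)^{−1/2} W₁d( B(y̌)^{3/2} y₁ ), where y̌ = (y₂,y₃) and B(y̌) = 1/(1 + y₂² + y₃²). Then for every y ∈ ℝ³: (i) |W̄(y)| ≤ η(y)^{1/6}; (ii) −1 ≤ ∂₁W̄(y) ≤ 0; (iii) |∂₁W̄(y)| ≤ η̃(y)^{−1/3}; (iv) the Euclidean norm of ∇̌W̄(y) = (∂₂W̄(y), ∂₃W̄(y)) is at most 2/3. Here η(y) = 1 + y₁² + |y̌|⁶ and η̃(y) = 1 + y₁² + |y̌|² + |y̌|⁶. -/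
/-!
`W1d y` is Cardano's formula for the unique real root of `w³ + w + y = 0`, and the scaling in
`W̄` turns this into the implicit equation `W̄³ + Q W̄ + y₁ = 0` with `Q = 1 + |y̌|² = 1/B`.
Differentiating that identity gives `∇W̄ = -(W̄ ∇Q + e₁) / (Q + 3W̄²)`, so every bound becomes a
polynomial inequality in `W̄` and `|y̌|²` once `y₁` is eliminated via `y₁ = -(W̄³ + Q W̄)`.
-/

noncomputable section

/-- The weight `η(y) = 1 + y₁² + |y̌|⁶`. -/
def etaW (y : V3) : ℝ := 1 + y 0 ^ 2 + (y 1 ^ 2 + y 2 ^ 2) ^ 3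

/-- The modified weight `η̃(y) = 1 + y₁² + |y̌|² + |y̌|⁶`. -/
def etaT (y : V3) : ℝ :=
  1 + y 0 ^ 2 + (y 1 ^ 2 + y 2 ^ 2) + (y 1 ^ 2 + y 2 ^ 2) ^ 3

lemma half_add_sqrt_pos (y : ℝ) : 0 < y / 2 + √(1 / 27 + y ^ 2 / 4) := by
  have : |y| / 2 < √(1 / 27 + y ^ 2 / 4) := by
    rw [Real.lt_sqrt (by positivity), div_pow, sq_abs]
    linarith
  linarith [neg_abs_le y]

lemma neg_half_add_sqrt_pos (y : ℝ) : 0 < -y / 2 + √(1 / 27 + y ^ 2 / 4) := by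
  simpa only [neg_sq] using half_add_sqrt_pos (-y)

lemma W1d_cubic_eq_zero (y : ℝ) : W1d y ^ 3 + W1d y + y = 0 := by
  set s := √(1 / 27 + y ^ 2 / 4)
  have ha := neg_half_add_sqrt_pos y
  have hb := half_add_sqrt_pos y
  have cube {x : ℝ} (hx : 0 ≤ x) : (x ^ ((1 : ℝ) / 3)) ^ 3 = x := by
    rw [one_div]; exact_mod_cast Real.rpow_inv_natCast_pow hx three_ne_zero
  set u := (-y / 2 + s) ^ ((1 : ℝ) / 3)
  set v := (y / 2 + s) ^ ((1 : ℝ) / 3)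
  have hu : u ^ 3 = -y / 2 + s := cube ha.le
  have hv : v ^ 3 = y / 2 + s := cube hb.le
  have huv : u * v = 1 / 3 := by
    have : (-y / 2 + s) * (y / 2 + s) = (1 / 3) ^ 3 := by
      linear_combination Real.sq_sqrt (by positivity : (0 : ℝ) ≤ 1 / 27 + y ^ 2 / 4)
    rw [← Real.mul_rpow ha.le hb.le, this, one_div (3 : ℝ), ← Real.rpow_natCast,
      ← Real.rpow_mul (by norm_num)]
    norm_num
  have hW : W1d y = u - v := rfl
  rw [hW]
  linear_combination hu - hv - 3 * (u - v) * huv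

theorem differentiable_W1d : Differentiable ℝ W1d := by
  intro y
  have ha := (neg_half_add_sqrt_pos y).ne'
  have hb := (half_add_sqrt_pos y).ne'
  unfold W1d
  fun_prop (disch := first | positivity | assumption)

open Topology in
theorem hasFDerivAt_of_cubic_eq_zero {E : Type*} [NormedAddCommGroup E] [NormedSpace ℝ E]
    {f a b : E → ℝ} {x : E} {a' b' : E →L[ℝ] ℝ} (hf : DifferentiableAt ℝ f x)
    (ha : HasFDerivAt a a' x) (hb : HasFDerivAt b b' x)
    (hcubic : ∀ᶠ z in 𝓝 x, f z ^ 3 + a z * f z + b z = 0) (hne : a x + 3 * f x ^ 2 ≠ 0) :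
    HasFDerivAt f (-(a x + 3 * f x ^ 2)⁻¹ • (f x • a' + b')) x := by
  have hF := hf.hasFDerivAt
  have hzero : HasFDerivAt (fun z ↦ f z ^ 3 + a z * f z + b z) (0 : E →L[ℝ] ℝ) x :=
    (hasFDerivAt_const 0 x).congr_of_eventuallyEq hcubic
  have hdiff := (((hF.pow 3).add (ha.mul hF)).add hb).unique hzero
  convert hF using 1
  ext v
  have hv := congrArg (· v) hdiff
  simp only [Nat.add_one_sub_one, nsmul_eq_mul, Nat.cast_ofNat, add_apply,
    smul_apply, smul_eq_mul, zero_apply] at hv ⊢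
  field_simp
  linear_combination -hv

lemma Wbar_cubic_eq_zero (z : V3) : Wbar z ^ 3 + (1 + z 1 ^ 2 + z 2 ^ 2) * Wbar z + z 0 = 0 := by
  have hB : 0 < Bf z := by unfold Bf; positivity
  set p := Bf z ^ (-(1 : ℝ) / 2)
  have hp2 : p ^ 2 = 1 + z 1 ^ 2 + z 2 ^ 2 := by
    rw [← Real.rpow_natCast, ← Real.rpow_mul hB.le, Bf]
    norm_num [Real.rpow_neg_one]
  have hp3 : p ^ 3 * Bf z ^ ((3 : ℝ) / 2) = 1 := by
    rw [← Real.rpow_natCast, ← Real.rpow_mul hB.le, ← Real.rpow_add hB]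
    norm_num
  have hw := W1d_cubic_eq_zero (Bf z ^ ((3 : ℝ) / 2) * z 0)
  have hW : Wbar z = p * W1d (Bf z ^ ((3 : ℝ) / 2) * z 0) := rfl
  rw [hW, ← hp2]
  linear_combination p ^ 3 * hw - z 0 * hp3

theorem differentiable_Wbar : Differentiable ℝ Wbar := by
  intro y
  unfold Wbar Bf
  have := differentiable_W1d
  fun_prop (disch := positivity)

open ContinuousLinearMap in
theorem hasFDerivAt_Wbar (y : V3) :
    HasFDerivAt Wbar (-(1 + y 1 ^ 2 + y 2 ^ 2 + 3 * Wbar y ^ 2)⁻¹ •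
      (Wbar y • ((2 * y 1) • proj 1 + (2 * y 2) • proj 2) + proj 0 : V3 →L[ℝ] ℝ)) y := by
  have hQ : HasFDerivAt (fun z : V3 ↦ 1 + z 1 ^ 2 + z 2 ^ 2)
      ((2 * y 1) • proj 1 + (2 * y 2) • proj 2 : V3 →L[ℝ] ℝ) y := by
    have h1 := (hasDerivAt_pow 2 (y 1)).comp_hasFDerivAt y (hasFDerivAt_apply (𝕜 := ℝ) 1 y)
    have h2 := (hasDerivAt_pow 2 (y 2)).comp_hasFDerivAt y (hasFDerivAt_apply (𝕜 := ℝ) 2 y)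
    exact ((h1.const_add 1).add h2).congr_fderiv (by simp)
  exact hasFDerivAt_of_cubic_eq_zero (differentiable_Wbar y) hQ (hasFDerivAt_apply 0 y)
    (.of_forall Wbar_cubic_eq_zero) (by positivity)

lemma pdS_zero_Wbar (y : V3) : pdS 0 Wbar y = -(1 + y 1 ^ 2 + y 2 ^ 2 + 3 * Wbar y ^ 2)⁻¹ := by
  simp [pdS, (hasFDerivAt_Wbar y).fderiv]

lemma pdS_one_Wbar (y : V3) :
    pdS 1 Wbar y = -(2 * y 1 * Wbar y) / (1 + y 1 ^ 2 + y 2 ^ 2 + 3 * Wbar y ^ 2) := by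
  simp [pdS, (hasFDerivAt_Wbar y).fderiv]
  ring

lemma pdS_two_Wbar (y : V3) :
    pdS 2 Wbar y = -(2 * y 2 * Wbar y) / (1 + y 1 ^ 2 + y 2 ^ 2 + 3 * Wbar y ^ 2) := by
  simp [pdS, (hasFDerivAt_Wbar y).fderiv]
  ring

section CubicBounds

variable {w q x : ℝ}

lemma pow_six_le_sq_of_cubic (hq : 0 ≤ q) (h : w ^ 3 + q * w + x = 0) : w ^ 6 ≤ x ^ 2 := by
  have hx : x = -(w * (w ^ 2 + q)) := by linear_combination h
  rw [hx]
  nlinarith [mul_nonneg hq (pow_nonneg (sq_nonneg w) 2), mul_nonneg (sq_nonneg q) (sq_nonneg w)]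

lemma weight_le_cube_of_cubic (hq : 1 ≤ q) (h : w ^ 3 + q * w + x = 0) :
    1 + x ^ 2 + (q - 1) + (q - 1) ^ 3 ≤ (q + 3 * w ^ 2) ^ 3 := by
  have hx : x = -(w ^ 3 + q * w) := by linear_combination h
  rw [hx]
  -- the difference is `26w⁶ + 25qw⁴ + 8q²w² + (3q - 1)(q - 1)`
  nlinarith [mul_nonneg (by linarith : (0 : ℝ) ≤ 3 * q - 1) (by linarith : (0 : ℝ) ≤ q - 1),
    pow_nonneg (sq_nonneg w) 3, mul_nonneg (by linarith : (0 : ℝ) ≤ q) (pow_nonneg (sq_nonneg w) 2),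
    mul_nonneg (by positivity : (0 : ℝ) ≤ q ^ 2) (sq_nonneg w)]

end CubicBounds

lemma sqrt_sq_add_sq_div_le_two_thirds (a b w : ℝ) :
    √((-(2 * a * w) / (1 + a ^ 2 + b ^ 2 + 3 * w ^ 2)) ^ 2 +
      (-(2 * b * w) / (1 + a ^ 2 + b ^ 2 + 3 * w ^ 2)) ^ 2) ≤ 2 / 3 := by
  set s := a ^ 2 + b ^ 2
  have hamgm : 12 * s * w ^ 2 ≤ (s + 3 * w ^ 2) ^ 2 := by nlinarith [sq_nonneg (s - 3 * w ^ 2)]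
  rw [Real.sqrt_le_left (by norm_num), div_pow, div_pow, ← add_div, div_le_iff₀ (by positivity)]
  nlinarith [sq_nonneg w, sq_nonneg s]

/-- Weighted zeroth- and first-order bounds for the profile `W̄`:
`|W̄| ≤ η^{1/6}`, `−1 ≤ ∂₁W̄ ≤ 0`, `|∂₁W̄| ≤ η̃^{−1/3}`, and `|∇̌W̄| ≤ 2/3`. -/
theorem Wbar_weighted_first_order_bounds (y : V3) :
    |Wbar y| ≤ etaW y ^ ((1 : ℝ) / 6) ∧
    -1 ≤ pdS 0 Wbar y ∧ pdS 0 Wbar y ≤ 0 ∧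
    |pdS 0 Wbar y| ≤ etaT y ^ (-(1 : ℝ) / 3) ∧
    Real.sqrt (pdS 1 Wbar y ^ 2 + pdS 2 Wbar y ^ 2) ≤ 2 / 3 := by
  have hcubic := Wbar_cubic_eq_zero y
  have hq : 1 ≤ 1 + y 1 ^ 2 + y 2 ^ 2 := by nlinarith [sq_nonneg (y 1), sq_nonneg (y 2)]
  have hD : 1 ≤ 1 + y 1 ^ 2 + y 2 ^ 2 + 3 * Wbar y ^ 2 := by nlinarith [sq_nonneg (Wbar y)]
  refine ⟨?_, ?_, ?_, ?_, ?_⟩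
  · have h6 : |Wbar y| ^ 6 ≤ etaW y := by
      rw [pow_abs, abs_of_nonneg (by positivity)]
      have hx := pow_six_le_sq_of_cubic (by linarith) hcubic
      unfold etaW
      nlinarith [pow_nonneg (add_nonneg (sq_nonneg (y 1)) (sq_nonneg (y 2))) 3]
    rw [one_div, Real.le_rpow_inv_iff_of_pos (abs_nonneg _) (by unfold etaW; positivity)
      (by norm_num)]
    exact_mod_cast h6
  · rw [pdS_zero_Wbar, neg_le_neg_iff]
    exact inv_le_one_of_one_le₀ hD
  · rw [pdS_zero_Wbar, neg_nonpos]
    positivity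
  · have hT : etaT y = 1 + y 0 ^ 2 + (1 + y 1 ^ 2 + y 2 ^ 2 - 1)
        + (1 + y 1 ^ 2 + y 2 ^ 2 - 1) ^ 3 := by
      unfold etaT; ring
    have hTpos : 0 < etaT y := by unfold etaT; positivity
    rw [pdS_zero_Wbar, abs_neg, abs_inv, abs_of_pos (by linarith),
      show -(1 : ℝ) / 3 = (-3)⁻¹ by norm_num,
      Real.le_rpow_inv_iff_of_neg (by positivity) hTpos (by norm_num),
      Real.inv_rpow (by positivity), Real.rpow_neg (by positivity), inv_inv, hT]
    exact_mod_cast weight_le_cube_of_cubic hq hcubic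
  · rw [pdS_one_Wbar, pdS_two_Wbar]
    exact sqrt_sq_add_sq_div_le_two_thirds _ _ _
end
end
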